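/- arXiv:1906.08509 — 3 statements merged into one kernel-verified Lean document; each statement's English description precedes it below -/
import Mathlib

section
/- With notation as above (X_1, …, X_d spanning ℝ^d, σ_k > 0, p in the interior of the simplex, Ω(p) = Σ_k (p_k/σ_k²) X_k X_kᵀ, and 𝕏₀ the matrix with rows X_kᵀ), the i-th diagonal entry of Ω(p)^{-1} equals Σ_{j=1}^d (σ_j² · Cof(𝕏₀ᵀ)_{ij}² / det(𝕏₀ᵀ𝕏₀)) · (1/p_j), where Cof(M)_{ij} denotes the (i,j) cofactor of M. -/
open Matrix

/-- The weighted covariance matrix `Ω(p) = ∑ₖ (pₖ/σₖ²) Xₖ Xₖᵀ`. -/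
noncomputable def Omega {d K : ℕ} (X : Fin K → Fin d → ℝ) (σ : Fin K → ℝ)
    (p : Fin K → ℝ) : Matrix (Fin d) (Fin d) ℝ :=
  ∑ k, (p k / σ k ^ 2) • Matrix.vecMulVec (X k) (X k)

/-- The (i,j) cofactor of a square matrix: `(−1)^{i+j}` times the (i,j) minor. -/
noncomputable def cof {n : ℕ} (M : Matrix (Fin (n + 1)) (Fin (n + 1)) ℝ)
    (i j : Fin (n + 1)) : ℝ :=
  (-1 : ℝ) ^ ((i : ℕ) + (j : ℕ)) * (M.submatrix i.succAbove j.succAbove).det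

/-- Diagonal entries of `Ω(p)⁻¹` in terms of cofactors of `𝕏₀ᵀ`. -/
theorem stmt3 {n : ℕ} (X : Fin (n + 1) → Fin (n + 1) → ℝ)
    (hdet : (Matrix.of fun k i => X k i).det ≠ 0)
    (σ : Fin (n + 1) → ℝ) (hσ : ∀ k, 0 < σ k)
    (p : Fin (n + 1) → ℝ) (hp : ∀ k, 0 < p k) (hp1 : ∑ k, p k = 1)
    (i : Fin (n + 1)) :
    (Omega X σ p)⁻¹ i i =
      ∑ j, σ j ^ 2 * cof (Matrix.of fun k l => X k l)ᵀ i j ^ 2 /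
          ((Matrix.of fun k l => X k l)ᵀ * (Matrix.of fun k l => X k l)).det * (1 / p j) := by
  set M : Matrix (Fin (n+1)) (Fin (n+1)) ℝ := Matrix.of fun k l => X k l with hM
  have hσ2 : ∀ k, (σ k ^ 2 : ℝ) ≠ 0 := fun k => pow_ne_zero _ (hσ k).ne'
  have hpne : ∀ k, p k ≠ 0 := fun k => (hp k).ne'
  have hOmega : Omega X σ p = Mᵀ * (Matrix.diagonal fun k => p k / σ k ^ 2) * M := by
    ext a b
    rw [Matrix.mul_apply]
    simp only [Omega, Matrix.sum_apply, Matrix.smul_apply, Matrix.vecMulVec_apply,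
      Matrix.mul_diagonal, Matrix.transpose_apply, smul_eq_mul]
    refine Finset.sum_congr rfl fun k _ => ?_
    simp only [hM, Matrix.of_apply]
    ring
  have hMi : M * M⁻¹ = 1 := Matrix.mul_nonsing_inv M (isUnit_iff_ne_zero.mpr hdet)
  have hMti : Mᵀ * (Mᵀ)⁻¹ = 1 := Matrix.mul_nonsing_inv Mᵀ (isUnit_iff_ne_zero.mpr (by simpa using hdet))
  have hDD : (Matrix.diagonal fun k => p k / σ k ^ 2) *
      (Matrix.diagonal fun k => σ k ^ 2 / p k) = 1 := by
    rw [Matrix.diagonal_mul_diagonal,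
      show (fun k => p k / σ k ^ 2 * (σ k ^ 2 / p k)) = fun _ => (1 : ℝ) from
        funext fun k => by rw [div_mul_div_comm, div_eq_one_iff_eq (mul_ne_zero (hσ2 k) (hpne k))]; ring,
      Matrix.diagonal_one]
  have hB : Omega X σ p * (M⁻¹ * (Matrix.diagonal fun k => σ k ^ 2 / p k) * (Mᵀ)⁻¹) = 1 := by
    rw [hOmega]
    simp only [Matrix.mul_assoc]
    rw [← Matrix.mul_assoc M M⁻¹, hMi, Matrix.one_mul,
      ← Matrix.mul_assoc (Matrix.diagonal fun k => p k / σ k ^ 2), hDD, Matrix.one_mul, hMti]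
  have hinv : (Omega X σ p)⁻¹ = M⁻¹ * (Matrix.diagonal fun k => σ k ^ 2 / p k) * (Mᵀ)⁻¹ :=
    Matrix.inv_eq_right_inv hB
  rw [hinv]
  have hT : (Mᵀ)⁻¹ = (M⁻¹)ᵀ := (Matrix.transpose_nonsing_inv M).symm
  have hentry : ∀ j, (M⁻¹) i j = (Matrix.det M)⁻¹ * Matrix.adjugate M i j := by
    intro j
    rw [Matrix.inv_def]
    simp [Ring.inverse_eq_inv']
  have hcof : ∀ j, cof Mᵀ i j = Matrix.adjugate M i j := by
    intro j
    rw [Matrix.adjugate_fin_succ_eq_det_submatrix, cof]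
    rw [show Mᵀ.submatrix i.succAbove j.succAbove = (M.submatrix j.succAbove i.succAbove)ᵀ from rfl,
      Matrix.det_transpose, add_comm (i : ℕ)]
  have hdet2 : (Mᵀ * M).det = M.det ^ 2 := by
    rw [Matrix.det_mul, Matrix.det_transpose, sq]
  rw [Matrix.mul_apply]
  refine Finset.sum_congr rfl fun j _ => ?_
  rw [Matrix.mul_diagonal, hT, Matrix.transpose_apply, hentry j, hcof j, hdet2]
  field_simp
end

section
/- With notation as above, for any p in the interior of the simplex Δ^d, the loss L(p) = Tr(Ω(p)^{-1}) admits the closed form L(p) = (1/det(𝕏₀ᵀ𝕏₀)) · Σ_{k=1}^d (σ_k²/p_k) · Cof(𝕏₀𝕏₀ᵀ)_{kk}, where Cof(M)_{kk} denotes the (k,k) cofactor of M. -/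
open Matrix

/-- Closed form for the A-optimal design loss:
`L(p) = (1/det(𝕏₀ᵀ𝕏₀)) ∑ₖ (σₖ²/pₖ) Cof(𝕏₀𝕏₀ᵀ)ₖₖ`. -/
theorem stmt4 {n : ℕ} (X : Fin (n + 1) → Fin (n + 1) → ℝ)
    (hdet : (Matrix.of fun k i => X k i).det ≠ 0)
    (σ : Fin (n + 1) → ℝ) (hσ : ∀ k, 0 < σ k)
    (p : Fin (n + 1) → ℝ) (hp : ∀ k, 0 < p k) (hp1 : ∑ k, p k = 1) :
    (Omega X σ p)⁻¹.trace =
      (1 / ((Matrix.of fun k l => X k l)ᵀ * (Matrix.of fun k l => X k l)).det) *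
        ∑ k, σ k ^ 2 / p k *
          cof ((Matrix.of fun k l => X k l) * (Matrix.of fun k l => X k l)ᵀ) k k := by
  set A : Matrix (Fin (n + 1)) (Fin (n + 1)) ℝ := Matrix.of fun k l => X k l with hA
  set D : Matrix (Fin (n + 1)) (Fin (n + 1)) ℝ :=
    Matrix.diagonal (fun k => p k / σ k ^ 2) with hD
  have hd : ∀ k, p k / σ k ^ 2 ≠ 0 := fun k =>
    div_ne_zero (hp k).ne' (pow_ne_zero _ (hσ k).ne')
  have hDdet : D.det ≠ 0 := by
    rw [hD, Matrix.det_diagonal]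
    exact Finset.prod_ne_zero_iff.2 fun k _ => hd k
  have hΩ : Omega X σ p = Aᵀ * D * A := by
    rw [hD]
    ext i j
    simp only [Omega, Matrix.sum_apply, Matrix.smul_apply, Matrix.vecMulVec_apply,
      Matrix.mul_apply, Matrix.diagonal_apply, Matrix.transpose_apply, hA, Matrix.of_apply,
      smul_eq_mul, mul_ite, ite_mul, mul_zero, zero_mul, Finset.sum_ite_eq',
      Finset.mem_univ, if_true]
    apply Finset.sum_congr rfl
    intro k _
    ring
  have hDinv : D⁻¹ = Matrix.diagonal (fun k => σ k ^ 2 / p k) := by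
    apply Matrix.inv_eq_right_inv
    rw [hD, Matrix.diagonal_mul_diagonal,
      show (fun k => p k / σ k ^ 2 * (σ k ^ 2 / p k)) = fun _ => (1 : ℝ) from
        funext fun k => by
          rw [div_mul_div_comm, mul_comm (σ k ^ 2)]
          exact div_self (mul_ne_zero (hp k).ne' (pow_ne_zero 2 (hσ k).ne')),
      Matrix.diagonal_one]
  have hΩinv : (Omega X σ p)⁻¹ = A⁻¹ * D⁻¹ * (Aᵀ)⁻¹ := by
    rw [hΩ, Matrix.mul_inv_rev, Matrix.mul_inv_rev, Matrix.mul_assoc]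
  rw [hΩinv, Matrix.trace_mul_comm, ← Matrix.mul_assoc, ← Matrix.mul_inv_rev, hDinv]
  have htr : ((A * Aᵀ)⁻¹ * Matrix.diagonal (fun k => σ k ^ 2 / p k)).trace =
      ∑ k, (A * Aᵀ)⁻¹ k k * (σ k ^ 2 / p k) := by
    simp [Matrix.trace, Matrix.diag, Matrix.mul_diagonal]
  rw [htr]
  have hAAT : (A * Aᵀ).det = A.det * A.det := by
    rw [Matrix.det_mul, Matrix.det_transpose]
  have hATA : (Aᵀ * A).det = A.det * A.det := by
    rw [Matrix.det_mul, Matrix.det_transpose]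
  have hinvkk : ∀ k, (A * Aᵀ)⁻¹ k k = (A.det * A.det)⁻¹ * cof (A * Aᵀ) k k := by
    intro k
    rw [Matrix.inv_def, Matrix.smul_apply, hAAT, Ring.inverse_eq_inv, smul_eq_mul,
      Matrix.adjugate_fin_succ_eq_det_submatrix]
    rfl
  rw [Finset.mul_sum]
  apply Finset.sum_congr rfl
  intro k _
  rw [hinvkk k, hATA]
  ring
end

section
/- Let X be a centered κ²-sub-Gaussian random variable with variance σ² sampled n times, with c = (e−1)/(2e(2e−1)), and T ≥ 2 an integer. If n = ⌈(72κ⁴/(cσ⁴)) log(2T)⌉, then with probability at least 1 − 1/T², the empirical variance σ̂_n² satisfies |σ̂_n² − σ²| ≤ σ²/2, and hence σ²/2 ≤ σ̂_n² ≤ 3σ²/2. -/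
/-!
Comparing `cosh (l X) ≥ 1 + l² X² / 2` with the sub-Gaussian mgf bound and letting `l → 0` gives
`σ² ≤ κ²`; the mgf bound also gives the tail `P(X² ≥ t) ≤ 2 exp (-t / (2κ²))`. Integrating
`e^{ry} - 1 - ry` against this tail (layer cake) yields `E exp (s (X² - σ²)) ≤ exp (16 κ⁴ s²)` for
`|s| ≤ 1 / (4κ²)`. Chernoff's bound then keeps the empirical second moment within `9σ²/20` of `σ²`,
and Hoeffding's inequality keeps the empirical mean within `σ/5` of `0`, each failing with
probability at most `1 / (2T²)` for the given `n`. When neither fails, the empirical variance is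
within `(9/20 + 1/25) σ² < σ²/2` of `σ²`.
-/

open MeasureTheory ProbabilityTheory Real Set Filter Topology
open scoped NNReal

namespace Real

theorem two_add_sq_le_exp_add_exp_neg (y : ℝ) : 2 + y ^ 2 ≤ exp y + exp (-y) := by
  have h := sum_le_hasSum (Finset.range 2) (fun n _ => by rw [pow_mul]; positivity) (hasSum_cosh y)
  norm_num [Finset.sum_range_succ, cosh_eq] at h
  linarith

theorem exp_mul_le_exp_abs_mul_sub {s y : ℝ} (hy : 0 ≤ y) :
    exp (s * y) ≤ exp (|s| * y) - (|s| - s) * y := by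
  rcases le_total 0 s with hs | hs
  · simp [abs_of_nonneg hs]
  · have := self_le_sinh_iff.2 (mul_nonneg (neg_nonneg.2 hs) hy)
    rw [sinh_eq, neg_mul, neg_neg] at this
    rw [abs_of_nonpos hs, neg_mul]
    linarith

theorem tendsto_div_exp_mul_sub_one (w : ℝ) :
    Tendsto (fun u => (exp (w * u) - 1) / u) (𝓝[>] 0) (𝓝 w) := by
  have h : HasDerivAt (fun u => exp (w * u)) w 0 := by
    simpa using ((hasDerivAt_id (0 : ℝ)).const_mul w).exp
  have := (hasDerivAt_iff_tendsto_slope_zero.1 h).mono_left (nhdsGT_le_nhdsNE 0)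
  simpa [div_eq_inv_mul] using this

theorem integral_Ioi_mul_exp_sub_one_mul_exp_neg {a r : ℝ} (hr : 0 ≤ r) (hra : r < a) :
    IntegrableOn (fun t => r * (exp (r * t) - 1) * exp (-a * t)) (Ioi 0) ∧
      ∫ t in Ioi 0, r * (exp (r * t) - 1) * exp (-a * t) = r ^ 2 / (a * (a - r)) := by
  have h_eq : (fun t => r * (exp (r * t) - 1) * exp (-a * t)) =
      fun t => r * exp ((r - a) * t) - r * exp (-a * t) := by
    ext t
    rw [show (r - a) * t = r * t + -a * t by ring, exp_add]
    ring
  have h₁ := (integrableOn_exp_mul_Ioi (a := r - a) (by linarith) 0).const_mul r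
  have h₂ := (integrableOn_exp_mul_Ioi (a := -a) (by linarith) 0).const_mul r
  rw [h_eq]
  refine ⟨h₁.sub h₂, ?_⟩
  rw [integral_sub h₁ h₂, integral_const_mul, integral_const_mul,
    integral_exp_mul_Ioi (by linarith), integral_exp_mul_Ioi (by linarith)]
  have : r - a ≠ 0 := by linarith
  have : a - r ≠ 0 := by linarith
  have : a ≠ 0 := by linarith
  simp only [mul_zero, exp_zero]
  field_simp
  ring

theorem two_mul_exp_neg_mul_le {T K n r : ℝ} (hT : 1 ≤ T) (hn : K * log (2 * T) ≤ n)
    (hK : 2 ≤ K * r) (hr : 0 ≤ r) : 2 * exp (-(n * r)) ≤ 1 / (2 * T ^ 2) := by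
  have hL : 0 ≤ log (2 * T) := log_nonneg (by linarith)
  have hrate : 2 * log (2 * T) ≤ n * r := by nlinarith
  have h : exp (2 * log (2 * T)) = 4 * T ^ 2 := by
    rw [two_mul (log _), exp_add, exp_log (by positivity)]; ring
  have := exp_le_exp.2 hrate
  rw [h] at this
  rw [exp_neg, ← div_eq_mul_inv, div_le_div_iff₀ (exp_pos _) (by positivity)]
  linarith

theorem exp_one_sub_one_div_mem_Ioc :
    (exp 1 - 1) / (2 * exp 1 * (2 * exp 1 - 1)) ∈ Ioc 0 (729 / 6400) := by
  have he₁ := exp_one_gt_d9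
  have he₂ := exp_one_lt_d9
  have hden : 0 < 2 * exp 1 * (2 * exp 1 - 1) := by nlinarith
  refine ⟨div_pos (by linarith) hden, ?_⟩
  rw [div_le_iff₀ hden]
  nlinarith

theorem two_le_mul_deviation_rates {c κ σ : ℝ} (hc₀ : 0 < c) (hc₁ : c ≤ 729 / 6400)
    (hκ : 0 < κ) (hσ : 0 < σ) (hσκ : σ ^ 2 ≤ κ ^ 2) :
    2 ≤ 72 * κ ^ 4 / (c * σ ^ 4) * ((9 * σ ^ 2 / 20) ^ 2 / (64 * (κ ^ 2) ^ 2)) ∧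
      2 ≤ 72 * κ ^ 4 / (c * σ ^ 4) * ((σ / 5) ^ 2 / (2 * κ ^ 2)) := by
  constructor
  · calc (2 : ℝ) ≤ 729 / (3200 * c) := by rw [le_div_iff₀ (by positivity)]; linarith
      _ = _ := by field_simp; ring
  · calc (2 : ℝ) ≤ 72 * κ ^ 2 / (50 * c * σ ^ 2) := by
          rw [le_div_iff₀ (by positivity)]; nlinarith
      _ = _ := by field_simp; ring

end Real

namespace MeasureTheory

variable {Ω : Type*} {mΩ : MeasurableSpace Ω} {μ : Measure Ω}

theorem integral_comp_le_setIntegral_mul_of_measureReal_le [IsFiniteMeasure μ] {f : Ω → ℝ}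
    (hf_nn : ∀ ω, 0 ≤ f ω) (hf : AEMeasurable f μ) {G g h : ℝ → ℝ}
    (hG : ∀ t, HasDerivAt G (g t) t) (hG0 : G 0 = 0) (hg : Continuous g)
    (hg_nn : ∀ t, 0 ≤ t → 0 ≤ g t) (htail : ∀ t, 0 < t → μ.real {ω | t ≤ f ω} ≤ h t)
    (hgh : IntegrableOn (fun t => g t * h t) (Ioi 0)) :
    Integrable (fun ω => G (f ω)) μ ∧ ∫ ω, G (f ω) ∂μ ≤ ∫ t in Ioi 0, g t * h t := by
  have hG_eq : ∀ y, ∫ t in 0..y, g t = G y := fun y => by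
    rw [intervalIntegral.integral_eq_sub_of_hasDerivAt (fun t _ => hG t)
      (hg.intervalIntegrable _ _), hG0, sub_zero]
  have hG_nn : ∀ ω, 0 ≤ G (f ω) := fun ω => hG_eq (f ω) ▸
    intervalIntegral.integral_nonneg (hf_nn ω) fun t ht => hg_nn t ht.1
  have hgh_nn : ∀ t ∈ Ioi (0 : ℝ), 0 ≤ g t * h t := fun t ht =>
    mul_nonneg (hg_nn t ht.le) (measureReal_nonneg.trans (htail t ht))
  have hG_meas : AEStronglyMeasurable (fun ω => G (f ω)) μ :=
    ((continuous_iff_continuousAt.2 fun t => (hG t).continuousAt).measurable.comp_aemeasurable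
      hf).aestronglyMeasurable
  have hlint : ∫⁻ ω, ENNReal.ofReal (G (f ω)) ∂μ ≤ ENNReal.ofReal (∫ t in Ioi 0, g t * h t) := by
    calc ∫⁻ ω, ENNReal.ofReal (G (f ω)) ∂μ
        = ∫⁻ ω, ENNReal.ofReal (∫ t in 0..f ω, g t) ∂μ := by simp_rw [hG_eq]
      _ = ∫⁻ t in Ioi 0, μ {ω | t ≤ f ω} * ENNReal.ofReal (g t) :=
          lintegral_comp_eq_lintegral_meas_le_mul μ (ae_of_all _ hf_nn) hf
            (fun t _ => hg.intervalIntegrable _ _)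
            ((ae_restrict_iff' measurableSet_Ioi).2 (ae_of_all _ fun t ht => hg_nn t ht.le))
      _ ≤ ∫⁻ t in Ioi 0, ENNReal.ofReal (g t * h t) := by
          refine setLIntegral_mono' measurableSet_Ioi fun t ht => ?_
          rw [← ofReal_measureReal, ← ENNReal.ofReal_mul measureReal_nonneg, mul_comm (g t)]
          exact ENNReal.ofReal_le_ofReal
            (mul_le_mul_of_nonneg_right (htail t ht) (hg_nn t ht.le))
      _ = ENNReal.ofReal (∫ t in Ioi 0, g t * h t) := by
          exact (ofReal_integral_eq_lintegral_ofReal hgh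
            ((ae_restrict_iff' measurableSet_Ioi).2 (ae_of_all _ hgh_nn))).symm
  refine ⟨⟨hG_meas, ?_⟩, ?_⟩
  · rw [hasFiniteIntegral_iff_ofReal (ae_of_all _ hG_nn)]
    exact hlint.trans_lt ENNReal.ofReal_lt_top
  · rw [integral_eq_lintegral_of_nonneg_ae (ae_of_all _ hG_nn) hG_meas]
    exact ENNReal.toReal_le_of_le_ofReal (setIntegral_nonneg measurableSet_Ioi hgh_nn) hlint

theorem measureReal_le_abs_le_add [IsFiniteMeasure μ] (Z : Ω → ℝ) (ε : ℝ) :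
    μ.real {ω | ε ≤ |Z ω|} ≤ μ.real {ω | ε ≤ Z ω} + μ.real {ω | ε ≤ -Z ω} :=
  (measureReal_mono (μ := μ) (s₂ := {ω | ε ≤ Z ω} ∪ {ω | ε ≤ -Z ω})
    fun _ hω => le_abs.1 (show ε ≤ |Z _| from hω)).trans (measureReal_union_le _ _)

theorem one_sub_add_le_measureReal [IsProbabilityMeasure μ] {s A B : Set Ω} (h : ∀ ω, ω ∉ A → ω ∉ B → ω ∈ s) :
    1 - (μ.real A + μ.real B) ≤ μ.real s := by
  have hcover : univ ⊆ s ∪ A ∪ B := fun ω _ => by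
    by_cases hA : ω ∈ A
    · exact Or.inl (Or.inr hA)
    by_cases hB : ω ∈ B
    · exact Or.inr hB
    exact Or.inl (Or.inl (h ω hA hB))
  have h₁ := measureReal_mono (μ := μ) hcover
  have h₂ := measureReal_union_le (μ := μ) (s ∪ A) B
  have h₃ := measureReal_union_le (μ := μ) s A
  rw [probReal_univ] at h₁
  linarith

end MeasureTheory

namespace ProbabilityTheory

variable {Ω : Type*} {mΩ : MeasurableSpace Ω} {μ : Measure Ω} [IsProbabilityMeasure μ]
  {ι : Type*} [Fintype ι] {Y : ι → Ω → ℝ}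

theorem measureReal_sum_ge_le_of_mgf_le (hY : ∀ i, Measurable (Y i)) (hindep : iIndepFun Y μ)
    {t C ε : ℝ} (ht : 0 ≤ t) (hint : ∀ i, Integrable (fun ω => exp (t * Y i ω)) μ)
    (hmgf : ∀ i, mgf (Y i) μ t ≤ exp (C * t ^ 2)) :
    μ.real {ω | ε ≤ ∑ i, Y i ω} ≤ exp (-t * ε + Fintype.card ι * C * t ^ 2) := by
  have h := measure_ge_le_exp_mul_mgf ε ht
    (hindep.integrable_exp_mul_sum hY (s := Finset.univ) fun i _ => hint i)
  rw [hindep.mgf_sum hY] at h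
  calc μ.real {ω | ε ≤ ∑ i, Y i ω} ≤ exp (-t * ε) * ∏ i, mgf (Y i) μ t := by
        simpa only [Finset.sum_apply] using h
    _ ≤ exp (-t * ε) * ∏ _i : ι, exp (C * t ^ 2) := by
        gcongr with i
        exacts [fun i _ => mgf_nonneg, hmgf i]
    _ = exp (-t * ε + Fintype.card ι * C * t ^ 2) := by
        rw [Finset.prod_const, Finset.card_univ, ← exp_nat_mul, ← exp_add]
        ring_nf

theorem measureReal_abs_sum_ge_le_of_mgf_le (hY : ∀ i, Measurable (Y i))
    (hindep : iIndepFun Y μ) {t C ε : ℝ} (ht : 0 ≤ t)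
    (hmgf : ∀ i s, |s| ≤ t →
      Integrable (fun ω => exp (s * Y i ω)) μ ∧ mgf (Y i) μ s ≤ exp (C * s ^ 2)) :
    μ.real {ω | ε ≤ |∑ i, Y i ω|} ≤ 2 * exp (-t * ε + Fintype.card ι * C * t ^ 2) := by
  have hpos := measureReal_sum_ge_le_of_mgf_le (ε := ε) hY hindep ht
    (fun i => (hmgf i t (abs_of_nonneg ht).le).1) (fun i => (hmgf i t (abs_of_nonneg ht).le).2)
  have hneg := measureReal_sum_ge_le_of_mgf_le (ε := ε) (Y := fun i => -Y i)
    (fun i => (hY i).neg) (hindep.comp (fun _ x => -x) fun _ => measurable_neg) ht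
    (fun i => by simpa [neg_mul, mul_neg] using (hmgf i (-t) (by simp [abs_of_nonneg ht])).1)
    (fun i => by simpa [mgf_neg] using (hmgf i (-t) (by simp [abs_of_nonneg ht])).2)
  calc μ.real {ω | ε ≤ |∑ i, Y i ω|}
      ≤ μ.real {ω | ε ≤ ∑ i, Y i ω} + μ.real {ω | ε ≤ ∑ i, -Y i ω} := by
        simpa only [Finset.sum_neg_distrib] using measureReal_le_abs_le_add (fun ω => ∑ i, Y i ω) ε
    _ ≤ 2 * exp (-t * ε + Fintype.card ι * C * t ^ 2) := by
        simp only [Pi.neg_apply] at hneg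
        linarith

end ProbabilityTheory

namespace ProbabilityTheory.HasSubgaussianMGF

variable {Ω : Type*} {mΩ : MeasurableSpace Ω} {μ : Measure Ω} [IsProbabilityMeasure μ]

section

variable {X : Ω → ℝ} {v : ℝ≥0}

theorem measureReal_sq_ge_le (h : HasSubgaussianMGF X v μ) {t : ℝ} (ht : 0 ≤ t) :
    μ.real {ω | t ≤ X ω ^ 2} ≤ 2 * exp (-t / (2 * v)) := by
  have hsub : {ω | t ≤ X ω ^ 2} ⊆ {ω | √t ≤ X ω} ∪ {ω | √t ≤ (-X) ω} := by
    intro ω hω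
    have : √t ≤ |X ω| := sqrt_sq_eq_abs (X ω) ▸ sqrt_le_sqrt hω
    rcases abs_cases (X ω) with ⟨h1, _⟩ | ⟨h1, _⟩
    · exact Or.inl (show √t ≤ X ω by linarith)
    · exact Or.inr (show √t ≤ -X ω by linarith)
  calc μ.real {ω | t ≤ X ω ^ 2}
      ≤ μ.real {ω | √t ≤ X ω} + μ.real {ω | √t ≤ (-X) ω} :=
        (measureReal_mono hsub).trans (measureReal_union_le _ _)
    _ ≤ exp (-√t ^ 2 / (2 * v)) + exp (-√t ^ 2 / (2 * v)) :=
        add_le_add (h.measure_ge_le (sqrt_nonneg t)) (h.neg.measure_ge_le (sqrt_nonneg t))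
    _ = 2 * exp (-t / (2 * v)) := by rw [sq_sqrt ht]; ring

theorem two_add_sq_mul_integral_sq_le (h : HasSubgaussianMGF X v μ) (l : ℝ) :
    2 + l ^ 2 * ∫ ω, X ω ^ 2 ∂μ ≤ 2 * exp (v / 2 * l ^ 2) := by
  have hX2 : Integrable (fun ω => X ω ^ 2) μ := (h.memLp 2).integrable_sq
  have hpos := h.integrable_exp_mul l
  have hneg : Integrable (fun ω => exp (-(l * X ω))) μ := by
    simpa only [neg_mul] using h.integrable_exp_mul (-l)
  have hquad : Integrable (fun ω => 2 + (l * X ω) ^ 2) μ := by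
    simp only [mul_pow]
    exact (integrable_const 2).add (hX2.const_mul _)
  calc 2 + l ^ 2 * ∫ ω, X ω ^ 2 ∂μ = ∫ ω, (2 + (l * X ω) ^ 2) ∂μ := by
        simp_rw [mul_pow]
        rw [integral_add (integrable_const _) (hX2.const_mul _), integral_const_mul]
        simp
    _ ≤ ∫ ω, (exp (l * X ω) + exp (-(l * X ω))) ∂μ :=
        integral_mono hquad (hpos.add hneg) fun ω => two_add_sq_le_exp_add_exp_neg _
    _ = mgf X μ l + mgf X μ (-l) := by
        rw [integral_add hpos hneg]
        simp only [mgf, neg_mul]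
    _ ≤ exp (v * l ^ 2 / 2) + exp (v * (-l) ^ 2 / 2) := add_le_add (h.mgf_le l) (h.mgf_le (-l))
    _ = 2 * exp (v / 2 * l ^ 2) := by rw [neg_sq]; ring_nf

theorem integral_sq_le (h : HasSubgaussianMGF X v μ) : ∫ ω, X ω ^ 2 ∂μ ≤ v := by
  have hbound : ∀ u : ℝ, 0 < u → ∫ ω, X ω ^ 2 ∂μ ≤ 2 * ((exp (v / 2 * u) - 1) / u) :=
    fun u hu => by
      have := h.two_add_sq_mul_integral_sq_le √u
      rw [sq_sqrt hu.le] at this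
      rw [mul_div_assoc', le_div_iff₀ hu]
      linarith
  have hlim := (tendsto_div_exp_mul_sub_one ((v : ℝ) / 2)).const_mul 2
  rw [mul_div_cancel₀ _ two_ne_zero] at hlim
  exact ge_of_tendsto hlim (eventually_nhdsWithin_of_forall hbound)

theorem integral_exp_mul_sq_sub_le (h : HasSubgaussianMGF X v μ) (hv : 0 < v) {r : ℝ}
    (hr : 0 ≤ r) (hrv : 4 * v * r ≤ 1) :
    Integrable (fun ω => exp (r * X ω ^ 2) - 1 - r * X ω ^ 2) μ ∧
      ∫ ω, (exp (r * X ω ^ 2) - 1 - r * X ω ^ 2) ∂μ ≤ 16 * v ^ 2 * r ^ 2 := by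
  have hv' : (0 : ℝ) < v := hv
  set a : ℝ := (2 * v)⁻¹
  have hra : r < a := by
    show r < (2 * (v : ℝ))⁻¹
    rw [← one_div, lt_div_iff₀ (by positivity)]
    nlinarith
  obtain ⟨hint, hval⟩ := integral_Ioi_mul_exp_sub_one_mul_exp_neg hr hra
  have hgh : ∀ t, r * (exp (r * t) - 1) * (2 * exp (-t / (2 * v))) =
      2 * (r * (exp (r * t) - 1) * exp (-a * t)) := fun t => by
    rw [neg_div, div_eq_inv_mul, neg_mul]; ring
  have := integral_comp_le_setIntegral_mul_of_measureReal_le (μ := μ) (f := fun ω => X ω ^ 2)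
    (G := fun y => exp (r * y) - 1 - r * y) (g := fun t => r * (exp (r * t) - 1))
    (h := fun t => 2 * exp (-t / (2 * v))) (fun ω => sq_nonneg _) (h.aemeasurable.pow_const 2)
    (fun t => ((((hasDerivAt_id t).const_mul r).exp.sub_const 1).sub
      ((hasDerivAt_id t).const_mul r)).congr_deriv (by simp only [id, mul_one]; ring))
    (by simp) (by fun_prop)
    (fun t ht => mul_nonneg hr (sub_nonneg.2 (one_le_exp (mul_nonneg hr ht))))
    (fun t ht => h.measureReal_sq_ge_le ht.le)
    (by simp_rw [hgh]; exact hint.const_mul 2)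
  refine ⟨this.1, this.2.trans ?_⟩
  simp_rw [hgh]
  have ha : a * (a - r) = (1 - 2 * v * r) / (4 * v ^ 2) := by
    simp only [a]; field_simp; ring
  rw [integral_const_mul, hval, ha, div_div_eq_mul_div, mul_div_assoc',
    div_le_iff₀ (by nlinarith)]
  nlinarith [mul_le_mul_of_nonneg_left hrv (by positivity : (0 : ℝ) ≤ 8 * v ^ 2 * r ^ 2)]

theorem mgf_sq_le (h : HasSubgaussianMGF X v μ) (hv : 0 < v) {s : ℝ} (hs : 4 * v * |s| ≤ 1) :
    Integrable (fun ω => exp (s * X ω ^ 2)) μ ∧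
      mgf (fun ω => X ω ^ 2) μ s ≤ exp (s * ∫ ω, X ω ^ 2 ∂μ + 16 * v ^ 2 * s ^ 2) := by
  obtain ⟨hrem, hrem_le⟩ := h.integral_exp_mul_sq_sub_le hv (abs_nonneg s) hs
  have hX2 : Integrable (fun ω => X ω ^ 2) μ := (h.memLp 2).integrable_sq
  have hlin : Integrable (fun ω => 1 + s * X ω ^ 2) μ := (integrable_const 1).add (hX2.const_mul s)
  have hmaj : Integrable (fun ω => 1 + s * X ω ^ 2 +
      (exp (|s| * X ω ^ 2) - 1 - |s| * X ω ^ 2)) μ := hlin.add hrem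
  -- for `s < 0` this is `e^{-z} + 2z ≤ e^z`, so both signs reduce to the bound at `|s|`
  have hle : ∀ ω, exp (s * X ω ^ 2) ≤
      1 + s * X ω ^ 2 + (exp (|s| * X ω ^ 2) - 1 - |s| * X ω ^ 2) := fun ω => by
    have := exp_mul_le_exp_abs_mul_sub (s := s) (sq_nonneg (X ω))
    linarith
  have hint : Integrable (fun ω => exp (s * X ω ^ 2)) μ :=
    have hXm := h.aemeasurable
    hmaj.mono' (by fun_prop : AEMeasurable _ μ).aestronglyMeasurable (ae_of_all _ fun ω => by
      rw [norm_of_nonneg (exp_nonneg _)]; exact hle ω)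
  refine ⟨hint, ?_⟩
  calc mgf (fun ω => X ω ^ 2) μ s
      ≤ ∫ ω, (1 + s * X ω ^ 2 + (exp (|s| * X ω ^ 2) - 1 - |s| * X ω ^ 2)) ∂μ :=
        integral_mono hint hmaj hle
    _ ≤ 1 + s * ∫ ω, X ω ^ 2 ∂μ + 16 * v ^ 2 * s ^ 2 := by
        rw [integral_add hlin hrem,
          integral_add (integrable_const 1) (hX2.const_mul s), integral_const_mul]
        rw [sq_abs] at hrem_le
        simp only [integral_const, probReal_univ, smul_eq_mul, one_mul]
        linarith
    _ ≤ exp (s * ∫ ω, X ω ^ 2 ∂μ + 16 * v ^ 2 * s ^ 2) := by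
        linarith [add_one_le_exp (s * ∫ ω, X ω ^ 2 ∂μ + 16 * v ^ 2 * s ^ 2)]

theorem mgf_sq_sub_integral_le (h : HasSubgaussianMGF X v μ) (hv : 0 < v) {s : ℝ}
    (hs : 4 * v * |s| ≤ 1) :
    Integrable (fun ω => exp (s * (X ω ^ 2 - ∫ ω, X ω ^ 2 ∂μ))) μ ∧
      mgf (fun ω => X ω ^ 2 - ∫ ω, X ω ^ 2 ∂μ) μ s ≤ exp (16 * v ^ 2 * s ^ 2) := by
  obtain ⟨hint, hmgf⟩ := h.mgf_sq_le hv hs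
  set m := ∫ ω, X ω ^ 2 ∂μ
  have hfac : ∀ ω, exp (s * (X ω ^ 2 - m)) = exp (s * X ω ^ 2) * exp (s * -m) := fun ω => by
    rw [← exp_add]; ring_nf
  refine ⟨by simpa only [hfac] using hint.mul_const _, ?_⟩
  rw [show (fun ω => X ω ^ 2 - m) = fun ω => X ω ^ 2 + -m by simp [sub_eq_add_neg],
    mgf_add_const]
  calc mgf (fun ω => X ω ^ 2) μ s * exp (s * -m)
      ≤ exp (s * m + 16 * v ^ 2 * s ^ 2) * exp (s * -m) :=
        mul_le_mul_of_nonneg_right hmgf (exp_nonneg _)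
    _ = exp (16 * v ^ 2 * s ^ 2) := by rw [← exp_add]; ring_nf

end

variable {ι : Type*} [Fintype ι] {X : ι → Ω → ℝ} {v : ℝ≥0}

theorem measureReal_abs_sum_ge_le (hindep : iIndepFun X μ)
    (hX : ∀ i, HasSubgaussianMGF (X i) v μ) {u : ℝ} (hu : 0 ≤ u) :
    μ.real {ω | Fintype.card ι * u ≤ |∑ i, X i ω|} ≤
      2 * exp (-(Fintype.card ι * (u ^ 2 / (2 * v)))) := by
  have hε : (0 : ℝ) ≤ Fintype.card ι * u := by positivity
  have hpos := measure_sum_ge_le_of_iIndepFun hindep (s := Finset.univ) (fun i _ => hX i) hε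
  have hneg := measure_sum_ge_le_of_iIndepFun (X := fun i => -X i)
    (hindep.comp (fun _ x => -x) fun _ => measurable_neg) (s := Finset.univ)
    (fun i _ => (hX i).neg) hε
  simp only [Finset.sum_const, Finset.card_univ, nsmul_eq_mul, NNReal.coe_mul, NNReal.coe_natCast,
    Pi.neg_apply, Finset.sum_neg_distrib] at hpos hneg
  have hexp : (Fintype.card ι * u) ^ 2 / (2 * (Fintype.card ι * v)) =
      Fintype.card ι * (u ^ 2 / (2 * v)) := by
    rcases eq_or_ne (Fintype.card ι : ℝ) 0 with h | h
    · simp [h]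
    · field_simp
  rw [neg_div, hexp] at hpos hneg
  have := measureReal_le_abs_le_add (μ := μ) (fun ω => ∑ i, X i ω) (Fintype.card ι * u)
  linarith

theorem measureReal_abs_sum_sq_sub_ge_le (hmeas : ∀ i, Measurable (X i))
    (hindep : iIndepFun X μ) (hv : 0 < v) (hX : ∀ i, HasSubgaussianMGF (X i) v μ) {m : ℝ}
    (hm : ∀ i, ∫ ω, X i ω ^ 2 ∂μ = m) {δ : ℝ} (hδ : 0 ≤ δ) (hδv : δ ≤ 8 * v) :
    μ.real {ω | Fintype.card ι * δ ≤ |∑ i, (X i ω ^ 2 - m)|} ≤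
      2 * exp (-(Fintype.card ι * (δ ^ 2 / (64 * v ^ 2)))) := by
  have hv' : (0 : ℝ) < v := hv
  have h := measureReal_abs_sum_ge_le_of_mgf_le (Y := fun i ω => X i ω ^ 2 - m)
    (ε := Fintype.card ι * δ) (t := δ / (32 * v ^ 2)) (C := 16 * v ^ 2)
    (fun i => ((hmeas i).pow_const 2).sub_const m)
    (hindep.comp (fun _ x => x ^ 2 - m) fun _ => (measurable_id.pow_const 2).sub_const m)
    (by positivity) fun i s hs => by
      have h4 : 4 * v * |s| ≤ 1 := by
        calc 4 * v * |s| ≤ 4 * v * (δ / (32 * v ^ 2)) := by gcongr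
          _ = δ / (8 * v) := by field_simp; ring
          _ ≤ 1 := by rw [div_le_one (by positivity)]; exact hδv
      simpa only [hm i] using (hX i).mgf_sq_sub_integral_le hv h4
  refine h.trans_eq ?_
  congr 2
  field_simp
  ring

end ProbabilityTheory.HasSubgaussianMGF

theorem abs_empiricalVariance_sub_le {n : ℕ} (x : Fin n → ℝ) {σ : ℝ}
    (hsq : |∑ i, (x i ^ 2 - σ ^ 2)| < n * (9 * σ ^ 2 / 20)) (hmean : |∑ i, x i| < n * (σ / 5)) :
    |((1 / n : ℝ) * ∑ i, x i ^ 2 - ((1 / n : ℝ) * ∑ i, x i) ^ 2) - σ ^ 2| ≤ σ ^ 2 / 2 := by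
  have hn : (0 : ℝ) < n := Nat.cast_pos.2 (Nat.pos_of_ne_zero (by rintro rfl; simp at hsq))
  have hA : |(1 / n : ℝ) * ∑ i, x i ^ 2 - σ ^ 2| < 9 * σ ^ 2 / 20 := by
    have : (1 / n : ℝ) * ∑ i, x i ^ 2 - σ ^ 2 = (∑ i, (x i ^ 2 - σ ^ 2)) / n := by
      rw [Finset.sum_sub_distrib, Finset.sum_const, Finset.card_univ, Fintype.card_fin,
        nsmul_eq_mul]
      field_simp
    rw [this, abs_div, abs_of_pos hn, div_lt_iff₀ hn]
    linarith
  have hB : ((1 / n : ℝ) * ∑ i, x i) ^ 2 < (σ / 5) ^ 2 := by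
    rw [← sq_abs, abs_mul, abs_of_pos (by positivity : (0 : ℝ) < 1 / n)]
    have : (1 / n : ℝ) * |∑ i, x i| < σ / 5 := by
      rw [one_div_mul_eq_div, div_lt_iff₀ hn]; linarith
    exact pow_lt_pow_left₀ this (by positivity) two_ne_zero
  rw [abs_lt] at hA
  rw [abs_le]
  constructor <;> nlinarith [sq_nonneg ((1 / n : ℝ) * ∑ i, x i)]

theorem stmt10_general {Ω : Type*} {mΩ : MeasurableSpace Ω} (μ : Measure Ω) [IsProbabilityMeasure μ]
    (T : ℕ) (hT : 2 ≤ T)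
    (κ σ : ℝ) (hκ : 0 < κ) (hσ : 0 < σ)
    (c : ℝ) (hc : c = (exp 1 - 1) / (2 * exp 1 * (2 * exp 1 - 1)))
    (n : ℕ) (hn : n = ⌈72 * κ ^ 4 / (c * σ ^ 4) * Real.log (2 * T)⌉₊)
    (X : Fin n → Ω → ℝ) (X0 : Ω → ℝ)
    (hmeas : ∀ i, Measurable (X i))
    (hindep : iIndepFun X μ)
    (hid : ∀ i, IdentDistrib (X i) X0 μ μ)
    (hsg : ∀ l : ℝ, Integrable (fun ω => exp (l * X0 ω)) μ ∧
      ∫ ω, exp (l * X0 ω) ∂μ ≤ exp (l ^ 2 * κ ^ 2 / 2))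
    (hvar : ∫ ω, X0 ω ^ 2 ∂μ = σ ^ 2) :
    ENNReal.ofReal (1 - 1 / (T : ℝ) ^ 2) ≤
      μ {ω | |((1 / n : ℝ) * ∑ i, X i ω ^ 2 - ((1 / n : ℝ) * ∑ i, X i ω) ^ 2) - σ ^ 2| ≤
          σ ^ 2 / 2 ∧
        σ ^ 2 / 2 ≤ (1 / n : ℝ) * ∑ i, X i ω ^ 2 - ((1 / n : ℝ) * ∑ i, X i ω) ^ 2 ∧
        (1 / n : ℝ) * ∑ i, X i ω ^ 2 - ((1 / n : ℝ) * ∑ i, X i ω) ^ 2 ≤ 3 * σ ^ 2 / 2} := by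
  obtain ⟨hc₀, hc₁⟩ : 0 < c ∧ c ≤ 729 / 6400 := hc ▸ exp_one_sub_one_div_mem_Ioc
  set v : ℝ≥0 := ⟨κ ^ 2, sq_nonneg κ⟩
  have hvκ : (v : ℝ) = κ ^ 2 := rfl
  have hv : 0 < v := by rw [← NNReal.coe_pos, hvκ]; positivity
  have hX0 : HasSubgaussianMGF X0 v μ :=
    ⟨fun l => (hsg l).1, fun l => (hsg l).2.trans_eq (by rw [hvκ]; ring_nf)⟩
  have hX : ∀ i, HasSubgaussianMGF (X i) v μ := fun i => hX0.congr_identDistrib (hid i).symm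
  have hσκ : σ ^ 2 ≤ κ ^ 2 := hvar ▸ hX0.integral_sq_le
  have hT₁ : (1 : ℝ) ≤ T := by norm_cast; omega
  have hnL : 72 * κ ^ 4 / (c * σ ^ 4) * log (2 * T) ≤ n := hn ▸ Nat.le_ceil _
  obtain ⟨hrate_sq, hrate_mean⟩ := two_le_mul_deviation_rates hc₀ hc₁ hκ hσ hσκ
  set Esq := {ω | n * (9 * σ ^ 2 / 20) ≤ |∑ i, (X i ω ^ 2 - σ ^ 2)|}
  set Emean := {ω | n * (σ / 5) ≤ |∑ i, X i ω|}
  have hsq : μ.real Esq ≤ 1 / (2 * T ^ 2) := by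
    have := HasSubgaussianMGF.measureReal_abs_sum_sq_sub_ge_le hmeas hindep hv hX
      (fun i => ((hid i).comp (measurable_id.pow_const 2)).integral_eq.trans hvar)
      (δ := 9 * σ ^ 2 / 20) (by positivity) (by rw [hvκ]; linarith)
    rw [Fintype.card_fin, hvκ] at this
    exact this.trans (two_mul_exp_neg_mul_le hT₁ hnL hrate_sq (by positivity))
  have hmean : μ.real Emean ≤ 1 / (2 * T ^ 2) := by
    have := HasSubgaussianMGF.measureReal_abs_sum_ge_le hindep hX (u := σ / 5) (by positivity)
    rw [Fintype.card_fin, hvκ] at this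
    exact this.trans (two_mul_exp_neg_mul_le hT₁ hnL hrate_mean (by positivity))
  refine ENNReal.ofReal_le_of_le_toReal ?_
  calc 1 - 1 / (T : ℝ) ^ 2 = 1 - (1 / (2 * T ^ 2) + 1 / (2 * T ^ 2)) := by ring
    _ ≤ 1 - (μ.real Esq + μ.real Emean) := by linarith
    _ ≤ _ := one_sub_add_le_measureReal fun ω h₁ h₂ => by
        have := abs_empiricalVariance_sub_le (fun i => X i ω) (not_le.1 h₁) (not_le.1 h₂)
        exact ⟨this, by linarith [(abs_le.1 this).1], by linarith [(abs_le.1 this).2]⟩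

/-- With `n = ⌈(72κ⁴/(cσ⁴)) log(2T)⌉` samples, the empirical variance is within a factor
`1/2` of the true variance `σ²` with probability at least `1 − 1/T²`. -/
theorem stmt10 {Ω : Type*} {mΩ : MeasurableSpace Ω} (μ : Measure Ω) [IsProbabilityMeasure μ]
    (T : ℕ) (hT : 2 ≤ T)
    (κ σ : ℝ) (hκ : 0 < κ) (hσ : 0 < σ)
    (c : ℝ) (hc : c = (exp 1 - 1) / (2 * exp 1 * (2 * exp 1 - 1)))
    (n : ℕ) (hn : n = ⌈72 * κ ^ 4 / (c * σ ^ 4) * Real.log (2 * T)⌉₊)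
    (X : Fin n → Ω → ℝ) (X0 : Ω → ℝ)
    (hmeas : ∀ i, Measurable (X i)) (hm0 : Measurable X0)
    (hindep : iIndepFun X μ)
    (hid : ∀ i, IdentDistrib (X i) X0 μ μ)
    (hcent : ∫ ω, X0 ω ∂μ = 0)
    (hsg : ∀ l : ℝ, Integrable (fun ω => exp (l * X0 ω)) μ ∧
      ∫ ω, exp (l * X0 ω) ∂μ ≤ exp (l ^ 2 * κ ^ 2 / 2))
    (hvar : ∫ ω, X0 ω ^ 2 ∂μ = σ ^ 2) :
    ENNReal.ofReal (1 - 1 / (T : ℝ) ^ 2) ≤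
      μ {ω | |((1 / n : ℝ) * ∑ i, X i ω ^ 2 - ((1 / n : ℝ) * ∑ i, X i ω) ^ 2) - σ ^ 2| ≤
          σ ^ 2 / 2 ∧
        σ ^ 2 / 2 ≤ (1 / n : ℝ) * ∑ i, X i ω ^ 2 - ((1 / n : ℝ) * ∑ i, X i ω) ^ 2 ∧
        (1 / n : ℝ) * ∑ i, X i ω ^ 2 - ((1 / n : ℝ) * ∑ i, X i ω) ^ 2 ≤ 3 * σ ^ 2 / 2} :=
  stmt10_general (mΩ := mΩ) μ T hT κ σ hκ hσ c hc n hn X X0 hmeas hindep hid hsg hvar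
end
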